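/- For every instance I over schema S_E, all g ≥ s > 0, and every Boolean MDDLog program Π over EDB schema S_E of diameter at most s, there is an S_E-instance J such that: J → I, the (1,s)-decomposition girth of J exceeds g, and I ⊨ Π iff J ⊨ Π. -/

import Mathlib

namespace DDLogPaper

/-! ### Basic objects: constants, facts, schemas, instances, homomorphisms -/

/-- The fixed countably infinite set of constants. -/
abbrev Const := ℕ
/-- Variables. -/
abbrev Var := ℕ
/-- Relation symbols. -/
abbrev RelSym := ℕ

/-- A fact: a relation symbol applied to a tuple of constants. -/
structure Fact where
  rel : RelSym
  args : List Const
deriving DecidableEq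

/-- A schema: a finite set of relation symbols, each with an arity. -/
structure Schema where
  rels : Finset RelSym
  arity : RelSym → ℕ

/-- An instance is a finite set of facts. -/
abbrev Inst := Finset Fact

/-- `I` is an instance over schema `S`. -/
def Schema.IsInstance (S : Schema) (I : Inst) : Prop :=
  ∀ f ∈ I, f.rel ∈ S.rels ∧ f.args.length = S.arity f.rel

/-- The active domain of an instance. -/
def adom (I : Inst) : Finset Const :=
  I.biUnion (fun f => f.args.toFinset)

/-- `h` is a homomorphism from `I` to `J`. -/
def IsHom (h : Const → Const) (I J : Inst) : Prop :=
  ∀ f ∈ I, (⟨f.rel, f.args.map h⟩ : Fact) ∈ J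

/-- There is a homomorphism from `I` to `J`. -/
def HomTo (I J : Inst) : Prop := ∃ h, IsHom h I J

/-! ### Girth -/

/-- `I` has a cycle of length `n`: distinct facts `f 0, …, f (n-1)` with positions
`p i ≠ p' i` such that the constant of `f i` at position `p' i` equals the constant of
`f (i+1 mod n)` at position `p (i+1 mod n)`. -/
def HasCycleOfLength (I : Inst) (n : ℕ) : Prop :=
  0 < n ∧
  ∃ (f : ℕ → Fact) (p p' : ℕ → ℕ),
    (∀ i < n, f i ∈ I) ∧
    (∀ i j, i < n → j < n → f i = f j → i = j) ∧
    (∀ i < n, p i ≠ p' i ∧ p i < (f i).args.length ∧ p' i < (f i).args.length) ∧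
    (∀ i < n, (f i).args.getD (p' i) 0 = (f ((i + 1) % n)).args.getD (p ((i + 1) % n)) 0)

/-- The girth of `I` exceeds `g` (in particular this holds if `I` has no cycle at all). -/
def GirthGT (I : Inst) (g : ℕ) : Prop :=
  ∀ n ≤ g, ¬ HasCycleOfLength I n

/-! ### Tree decompositions -/

/-- `I` has a tree decomposition with bags of size at most `k`, overlap of distinct bags of
size at most `ℓ`, and such that every bag contains all elements of `params`. -/
def HasTreeDecompWithParams (I : Inst) (params : Finset Const) (ℓ k : ℕ) : Prop :=
  ∃ (V : Type) (T : SimpleGraph V) (B : V → Finset Const),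
    T.IsTree ∧
    (∀ v, B v ⊆ adom I ∪ params) ∧
    (∀ a ∈ adom I, (T.induce {v | a ∈ B v}).Connected) ∧
    (∀ f ∈ I, ∃ v, ∀ c ∈ f.args, c ∈ B v) ∧
    (∀ v, params ⊆ B v) ∧
    (∀ v w, v ≠ w → (B v ∩ B w).card ≤ ℓ) ∧
    (∀ v, (B v).card ≤ k)

/-- `I` has treewidth `(ℓ,k)`: it admits an `(ℓ,k)`-tree decomposition. -/
def HasTreeDecomp (I : Inst) (ℓ k : ℕ) : Prop :=
  HasTreeDecompWithParams I ∅ ℓ k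

/-! ### Terms, atoms, rules, programs -/

/-- A term is a variable or a constant. -/
inductive Term where
  | var : Var → Term
  | const : Const → Term
deriving DecidableEq

def Term.eval (v : Var → Const) : Term → Const
  | .var x => v x
  | .const c => c

def Term.varSet : Term → Finset Var
  | .var x => {x}
  | .const _ => ∅

/-- An atom: a relation symbol applied to a tuple of terms. -/
structure Atom where
  rel : RelSym
  args : List Term
deriving DecidableEq

/-- Apply a valuation to an atom, obtaining a fact. -/
def Atom.app (a : Atom) (v : Var → Const) : Fact :=
  ⟨a.rel, a.args.map (Term.eval v)⟩

def Atom.vars (a : Atom) : Finset Var :=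
  a.args.foldr (fun t s => t.varSet ∪ s) ∅

/-- The atom mentions no constants. -/
def Atom.constFree (a : Atom) : Prop :=
  ∀ t ∈ a.args, ∃ x, t = Term.var x

def Atom.size (a : Atom) : ℕ := 1 + a.args.length

/-- The number of variable occurrences in an atom. -/
def Atom.varOccs (a : Atom) : ℕ :=
  (a.args.filter (fun t => match t with | Term.var _ => true | Term.const _ => false)).length

/-- A (disjunctive) rule: a disjunction of head atoms and a conjunction of body atoms. -/
structure Rule where
  head : List Atom
  body : List Atom
deriving DecidableEq

def Rule.atoms (ρ : Rule) : List Atom := ρ.head ++ ρ.body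

def Rule.vars (ρ : Rule) : Finset Var :=
  ρ.atoms.foldr (fun a s => a.vars ∪ s) ∅

def Rule.bodyVars (ρ : Rule) : Finset Var :=
  ρ.body.foldr (fun a s => a.vars ∪ s) ∅

/-- The rule holds in a set of facts `J` (all variables universally quantified). -/
def Rule.holdsIn (ρ : Rule) (J : Set Fact) : Prop :=
  ∀ v : Var → Const, (∀ a ∈ ρ.body, a.app v ∈ J) → ∃ a ∈ ρ.head, a.app v ∈ J

def Rule.size (ρ : Rule) : ℕ := 1 + (ρ.atoms.map Atom.size).sum

def Rule.bodyVarOccs (ρ : Rule) : ℕ := (ρ.body.map Atom.varOccs).sum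

/-- A disjunctive Datalog program: a finite set of rules together with a selected goal
relation and its arity. -/
structure Program where
  rules : Finset Rule
  goal : RelSym
  goalArity : ℕ

/-- `P.models I t` formalizes `P ∪ I ⊨ goal(t)` (first-order entailment; by Herbrand's
theorem for universal sentences it suffices to quantify over all sets of facts). -/
def Program.models (P : Program) (I : Inst) (t : List Const) : Prop :=
  ∀ J : Set Fact, (I : Set Fact) ⊆ J → (∀ ρ ∈ P.rules, ρ.holdsIn J) →
    (⟨P.goal, t⟩ : Fact) ∈ J

/-- The IDB relations of a program: the relations occurring in some rule head, together
with the goal relation. -/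
def Program.IDB (P : Program) : Finset RelSym :=
  insert P.goal (P.rules.biUnion (fun ρ => (ρ.head.map Atom.rel).toFinset))

/-- `P` is a well-formed disjunctive Datalog program over EDB schema `S`. -/
def Program.IsDDLog (P : Program) (S : Schema) : Prop :=
  (∀ r ∈ P.IDB, r ∉ S.rels) ∧
  ∀ ρ ∈ P.rules,
    ρ.body ≠ [] ∧
    (∀ a ∈ ρ.head, a.vars ⊆ ρ.bodyVars) ∧
    (∀ a ∈ ρ.body, a.rel ≠ P.goal) ∧
    ((∃ a ∈ ρ.head, a.rel = P.goal) → ρ.head.length = 1) ∧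
    (∀ a ∈ ρ.atoms, a.rel = P.goal → a.args.length = P.goalArity) ∧
    (∀ a ∈ ρ.atoms, a.rel ∉ P.IDB → a.rel ∈ S.rels ∧ a.args.length = S.arity a.rel)

/-- Monadic disjunctive Datalog: all IDB relations except possibly goal have arity ≤ 1. -/
def Program.IsMDDLog (P : Program) (S : Schema) : Prop :=
  P.IsDDLog S ∧
  ∀ ρ ∈ P.rules, ∀ a ∈ ρ.atoms, a.rel ∈ P.IDB → a.rel ≠ P.goal → a.args.length ≤ 1

/-- Datalog: every rule head consists of exactly one atom. -/
def Program.IsDatalog (P : Program) (S : Schema) : Prop :=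
  P.IsDDLog S ∧ ∀ ρ ∈ P.rules, ρ.head.length = 1

/-- Monadic Datalog. -/
def Program.IsMDLog (P : Program) (S : Schema) : Prop :=
  P.IsDatalog S ∧
  ∀ ρ ∈ P.rules, ∀ a ∈ ρ.atoms, a.rel ∈ P.IDB → a.rel ≠ P.goal → a.args.length ≤ 1

/-- The program mentions no constants. -/
def Program.constFree (P : Program) : Prop :=
  ∀ ρ ∈ P.rules, ∀ a ∈ ρ.atoms, a.constFree

/-- The size of a program (number of symbols needed to write it). -/
def Program.size (P : Program) : ℕ := ∑ ρ ∈ P.rules, ρ.size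

/-- The diameter: the maximum number of variables occurring in a rule. -/
def Program.diameter (P : Program) : ℕ := P.rules.sup (fun ρ => ρ.vars.card)

/-- The rule size: the maximum number of variable occurrences in a rule body. -/
def Program.ruleSize (P : Program) : ℕ := P.rules.sup Rule.bodyVarOccs

def Atom.widthContrib (P : Program) (a : Atom) : ℕ :=
  if a.rel ∈ P.IDB ∧ a.rel ≠ P.goal then a.args.length else 0

/-- The width: the maximum arity of non-goal IDB relations used in the program. -/
def Program.width (P : Program) : ℕ :=
  P.rules.sup (fun ρ => (ρ.atoms.map (Atom.widthContrib P)).foldr max 0)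

/-- A simple MDDLog program: each rule has at most one EDB atom, which contains all
variables of the rule body, each exactly once; rules without an EDB atom have at most
one variable. -/
def Program.IsSimple (P : Program) : Prop :=
  ∀ ρ ∈ P.rules,
    (∀ a ∈ ρ.body, ∀ b ∈ ρ.body, a.rel ∉ P.IDB → b.rel ∉ P.IDB → a = b) ∧
    (∀ a ∈ ρ.body, a.rel ∉ P.IDB →
      ∃ xs : List Var, a.args = xs.map Term.var ∧ xs.Nodup ∧ xs.toFinset = ρ.bodyVars) ∧
    ((∀ a ∈ ρ.body, a.rel ∈ P.IDB) → ρ.bodyVars.card ≤ 1)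

/-! ### Datalog with parameters -/

/-- An `(ℓ,k)`-Datalog program with `n` parameters: an `n`-ary `(ℓ+n,k+n)`-Datalog program
in which all IDB relations have arity at least `n` and in every rule all IDB atoms
(including goal atoms) agree on the terms in their last `n` positions. -/
def Program.IsParamDatalog (Γ : Program) (S : Schema) (ℓ k n : ℕ) : Prop :=
  Γ.IsDatalog S ∧ Γ.goalArity = n ∧
  Γ.width ≤ ℓ + n ∧ Γ.diameter ≤ k + n ∧
  (∀ ρ ∈ Γ.rules, ∀ a ∈ ρ.atoms, a.rel ∈ Γ.IDB → n ≤ a.args.length) ∧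
  (∀ ρ ∈ Γ.rules, ∃ ys : List Term,
    ∀ a ∈ ρ.atoms, a.rel ∈ Γ.IDB → a.args.drop (a.args.length - n) = ys)

/-! ### Conjunctive queries and unions of conjunctive queries -/

/-- A conjunctive query: answer variables, relational atoms, and equality atoms. -/
structure CQ where
  answers : List Var
  atoms : List Atom
  eqs : List (Var × Var)

/-- The CQ only uses relations from schema `S` (with correct arities) and no constants. -/
def CQ.over (q : CQ) (S : Schema) : Prop :=
  ∀ a ∈ q.atoms, a.rel ∈ S.rels ∧ a.args.length = S.arity a.rel ∧ a.constFree

/-- `t` is an answer to the CQ `q` on `I`. -/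
def CQ.holds (q : CQ) (I : Inst) (t : List Const) : Prop :=
  ∃ h : Var → Const,
    (∀ a ∈ q.atoms, a.app h ∈ I) ∧
    (∀ e ∈ q.eqs, h e.1 = h e.2) ∧
    q.answers.map h = t

/-- A union of conjunctive queries is a finite list of CQs. -/
abbrev UCQ := List CQ

def UCQHolds (u : UCQ) (I : Inst) (t : List Const) : Prop :=
  ∃ q ∈ u, q.holds I t

def UCQOver (u : UCQ) (S : Schema) (n : ℕ) : Prop :=
  ∀ q ∈ u, q.over S ∧ q.answers.length = n

def Term.toConst : Term → Const
  | .var x => x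
  | .const c => c

/-- A CQ viewed as an instance (variables as constants). -/
def CQ.toInst (q : CQ) : Inst :=
  (q.atoms.map (fun a => (⟨a.rel, a.args.map Term.toConst⟩ : Fact))).toFinset

/-! ### First-order queries -/

/-- First-order formulas over a relational vocabulary, possibly with equality,
without constants and function symbols. -/
inductive FO where
  | rel : RelSym → List Var → FO
  | eq : Var → Var → FO
  | neg : FO → FO
  | conj : FO → FO → FO
  | disj : FO → FO → FO
  | ex : Var → FO → FO
  | all : Var → FO → FO

/-- Evaluation of a first-order formula in an instance (active-domain quantification). -/
def FO.eval (I : Inst) : FO → (Var → Const) → Prop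
  | .rel r xs, v => (⟨r, xs.map v⟩ : Fact) ∈ I
  | .eq x y, v => v x = v y
  | .neg φ, v => ¬ FO.eval I φ v
  | .conj φ ψ, v => FO.eval I φ v ∧ FO.eval I ψ v
  | .disj φ ψ, v => FO.eval I φ v ∨ FO.eval I ψ v
  | .ex x φ, v => ∃ c ∈ adom I, FO.eval I φ (Function.update v x c)
  | .all x φ, v => ∀ c ∈ adom I, FO.eval I φ (Function.update v x c)

/-- The formula only uses relation symbols from `S`, with correct arities. -/
def FO.over (S : Schema) : FO → Prop
  | .rel r xs => r ∈ S.rels ∧ xs.length = S.arity r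
  | .eq _ _ => True
  | .neg φ => FO.over S φ
  | .conj φ ψ => FO.over S φ ∧ FO.over S ψ
  | .disj φ ψ => FO.over S φ ∧ FO.over S ψ
  | .ex _ φ => FO.over S φ
  | .all _ φ => FO.over S φ

/-- Free variables of a first-order formula. -/
def FO.free : FO → Finset Var
  | .rel _ xs => xs.toFinset
  | .eq x y => {x, y}
  | .neg φ => φ.free
  | .conj φ ψ => φ.free ∪ ψ.free
  | .disj φ ψ => φ.free ∪ ψ.free
  | .ex x φ => φ.free.erase x
  | .all x φ => φ.free.erase x

/-! ### Rewritings -/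

/-- `φ` is an FO-rewriting of the (n-ary) program `P` over `S`
(answer variables are `0, …, n-1`). -/
def FOIsRewritingOf (φ : FO) (S : Schema) (P : Program) : Prop :=
  FO.over S φ ∧ φ.free ⊆ Finset.range P.goalArity ∧
  ∀ I : Inst, S.IsInstance I → ∀ t : List Const, t.length = P.goalArity →
    (∀ c ∈ t, c ∈ adom I) → (FO.eval I φ (fun i => t.getD i 0) ↔ P.models I t)

/-- `u` is a UCQ-rewriting of the program `P` over `S`. -/
def UCQIsRewritingOf (u : UCQ) (S : Schema) (P : Program) : Prop :=
  UCQOver u S P.goalArity ∧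
  ∀ I : Inst, S.IsInstance I → ∀ t : List Const, t.length = P.goalArity →
    (∀ c ∈ t, c ∈ adom I) → (UCQHolds u I t ↔ P.models I t)

/-- The program `Γ` is a rewriting of the program `P` over `S`. -/
def Program.IsRewritingOf (Γ : Program) (S : Schema) (P : Program) : Prop :=
  Γ.goalArity = P.goalArity ∧
  ∀ I : Inst, S.IsInstance I → ∀ t : List Const, t.length = P.goalArity →
    (∀ c ∈ t, c ∈ adom I) → (Γ.models I t ↔ P.models I t)

/-- The program `Γ` is sound for the program `P` over `S`. -/
def Program.SoundFor (Γ : Program) (S : Schema) (P : Program) : Prop :=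
  ∀ I : Inst, S.IsInstance I → ∀ t : List Const, t.length = P.goalArity →
    (∀ c ∈ t, c ∈ adom I) → Γ.models I t → P.models I t

/-! ### Boolean queries, CSPs -/

/-- The complement of the generalized CSP given by the set of templates `S`, as a
Boolean query: true on `I` iff `I` maps homomorphically to no template in `S`. -/
def coCSP (S : Finset Inst) : Inst → Prop := fun I => ∀ T ∈ S, ¬ HomTo I T

/-- `φ` is an FO-definition (rewriting) of the Boolean query `Q` over `S`. -/
def IsFODefOf (φ : FO) (S : Schema) (Q : Inst → Prop) : Prop :=
  FO.over S φ ∧ φ.free = ∅ ∧ ∀ I : Inst, S.IsInstance I → (FO.eval I φ (fun _ => 0) ↔ Q I)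

/-- `u` is a UCQ-definition (rewriting) of the Boolean query `Q` over `S`. -/
def IsUCQDefOf (u : UCQ) (S : Schema) (Q : Inst → Prop) : Prop :=
  UCQOver u S 0 ∧ ∀ I : Inst, S.IsInstance I → (UCQHolds u I [] ↔ Q I)

/-- `Γ` is an MDLog-definition (rewriting) of the Boolean query `Q` over `S`. -/
def IsMDLogDefOf (Γ : Program) (S : Schema) (Q : Inst → Prop) : Prop :=
  Γ.IsMDLog S ∧ Γ.constFree ∧ Γ.goalArity = 0 ∧
  ∀ I : Inst, S.IsInstance I → (Γ.models I [] ↔ Q I)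

/-- `Γ` is a Datalog-definition (rewriting) of the Boolean query `Q` over `S`. -/
def IsDLogDefOf (Γ : Program) (S : Schema) (Q : Inst → Prop) : Prop :=
  Γ.IsDatalog S ∧ Γ.constFree ∧ Γ.goalArity = 0 ∧
  ∀ I : Inst, S.IsInstance I → (Γ.models I [] ↔ Q I)

/-! ### Aggregation schemas -/

/-- A `k`-aggregation schema for `SE`: every relation `R` is of the form `R_{q(x̄)}` for a
quantifier-free CQ `q(x̄)` over `SE` with at most `k` answer variables, the arity of `R`
being the number of answer variables of `q(x̄)`. -/
structure Aggregation (SE : Schema) (k : ℕ) where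
  S : Schema
  q : RelSym → CQ
  wf : ∀ R ∈ S.rels,
    (q R).over SE ∧
    (q R).eqs = [] ∧
    (q R).answers.Nodup ∧
    (q R).answers.length = S.arity R ∧
    (q R).answers.length ≤ k ∧
    (∀ a ∈ (q R).atoms, a.vars ⊆ (q R).answers.toFinset)

/-- `I'` is the `S'`-instance corresponding to the `SE`-instance `I`: it consists of all
facts `R_{q(x̄)}(ā)` with `I ⊨ q(ā)`. -/
def CorrUp {SE : Schema} {k : ℕ} (A : Aggregation SE k) (I I' : Inst) : Prop :=
  ∀ f : Fact, f ∈ I' ↔ (f.rel ∈ A.S.rels ∧ (A.q f.rel).holds I f.args)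

/-- `I` is the `SE`-instance corresponding to the `S'`-instance `I'`: it consists of all
facts that occur as a conjunct of `q(ā)` for some fact `R_{q(x̄)}(ā) ∈ I'`. -/
def CorrDown {SE : Schema} {k : ℕ} (A : Aggregation SE k) (I' I : Inst) : Prop :=
  ∀ g : Fact, g ∈ I ↔
    ∃ f ∈ I', ∃ h : Var → Const,
      (A.q f.rel).answers.map h = f.args ∧ ∃ a ∈ (A.q f.rel).atoms, Atom.app a h = g

/-! ### Equality -/

/-- The distinguished binary relation symbol `eq`. -/
def eqRel : RelSym := 0

/-- The schema contains the distinguished binary relation `eq`. -/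
def HasEqualitySchema (S : Schema) : Prop := eqRel ∈ S.rels ∧ S.arity eqRel = 2

/-- A template has equality: it interprets `eq` as `{(a,a) | a ∈ adom T}`. -/
def TemplateHasEquality (T : Inst) : Prop :=
  ∀ a b : Const, ((⟨eqRel, [a, b]⟩ : Fact) ∈ T ↔ (a = b ∧ a ∈ adom T))

def eqRuleFwd (R : RelSym) : Rule :=
  ⟨[⟨R, [Term.var 1]⟩], [⟨R, [Term.var 0]⟩, ⟨eqRel, [Term.var 0, Term.var 1]⟩]⟩

def eqRuleBwd (R : RelSym) : Rule :=
  ⟨[⟨R, [Term.var 0]⟩], [⟨R, [Term.var 1]⟩, ⟨eqRel, [Term.var 0, Term.var 1]⟩]⟩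

/-- The extension `P^=` of `P` with the fresh EDB relation `eq` and the rules
`P(x) ∧ eq(x,y) → P(y)` and `P(y) ∧ eq(x,y) → P(x)` for each IDB relation `P`. -/
def Program.withEq (P : Program) : Program :=
  ⟨P.rules ∪ (P.IDB.erase P.goal).biUnion (fun R => {eqRuleFwd R, eqRuleBwd R}),
   P.goal, P.goalArity⟩

/-! ### (1,k)-decompositions and decomposition girth -/

def partInst (I : Inst) (part : Fact → ℕ) (v : ℕ) : Inst :=
  I.filter (fun f => part f = v)

/-- `part` induces a `(1,k)`-decomposition of `I`: parts have active domains of size at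
most `k`, distinct parts overlap in at most one constant. -/
def IsDecompOf (I : Inst) (part : Fact → ℕ) (k : ℕ) : Prop :=
  (∀ v ∈ I.image part, (adom (partInst I part v)).card ≤ k) ∧
  (∀ v w, v ∈ I.image part → w ∈ I.image part → v ≠ w →
    ((adom (partInst I part v)) ∩ (adom (partInst I part w))).card ≤ 1)

/-- The instance over an aggregation schema induced by a decomposition: one fact per part,
whose arguments enumerate the active domain of the part (in a fixed order). -/
def decompInst (I : Inst) (part : Fact → ℕ) : Inst :=
  (I.image part).image
    (fun v => (⟨v, (adom (partInst I part v)).sort (· ≤ ·)⟩ : Fact))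

/-- The `(1,k)`-decomposition girth of `I` exceeds `g`: some `(1,k)`-decomposition `D` of
`I` is such that the girth of `I_D` exceeds `g`. -/
def DecompGirthGT (I : Inst) (k g : ℕ) : Prop :=
  ∃ part : Fact → ℕ, IsDecompOf I part k ∧ GirthGT (decompInst I part) g

/-! ### MMSNP -/

/-- An atom `X_i(x_j)` built from a monadic second-order variable. -/
structure SOAtom where
  pred : ℕ
  var : Var
deriving DecidableEq

/-- An implication `β₁ ∨ ⋯ ∨ βₙ ← α₁ ∧ ⋯ ∧ αₘ` of an MMSNP formula: the `β`s are
second-order atoms, the `α`s are second-order atoms or EDB atoms. -/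
structure MMSNPImpl where
  headDisjuncts : List SOAtom
  bodySO : List SOAtom
  bodyEDB : List Fact
deriving DecidableEq

/-- An MMSNP formula `∃X₁⋯∃Xp ∀x₁⋯∀xm φ` with `freeVarCount` free first-order variables
(the variables `0, …, freeVarCount - 1`). -/
structure MMSNP where
  freeVarCount : ℕ
  impls : List MMSNPImpl

def MMSNPOver (θ : MMSNP) (S : Schema) : Prop :=
  ∀ c ∈ θ.impls, ∀ f ∈ c.bodyEDB, f.rel ∈ S.rels ∧ f.args.length = S.arity f.rel

def MMSNPImpl.vars (c : MMSNPImpl) : Finset Var :=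
  (c.headDisjuncts.map SOAtom.var).toFinset ∪ (c.bodySO.map SOAtom.var).toFinset ∪
    c.bodyEDB.foldr (fun f s => f.args.toFinset ∪ s) ∅

/-- The diameter of an MMSNP formula: the maximum number of variables in an implication. -/
def MMSNP.diameter (θ : MMSNP) : ℕ :=
  (θ.impls.map (fun c => c.vars.card)).foldr max 0

/-- `I ⊨ θ[t]`: satisfaction of an MMSNP formula in an instance, with the free variables
`0, …, freeVarCount-1` interpreted by the tuple `t`. -/
def MMSNPSat (θ : MMSNP) (I : Inst) (t : List Const) : Prop :=
  ∃ X : ℕ → Set Const,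
    ∀ v : Var → Const, (∀ x, v x ∈ adom I) → (∀ i < θ.freeVarCount, v i = t.getD i 0) →
      ∀ c ∈ θ.impls,
        ((∀ a ∈ c.bodySO, v a.var ∈ X a.pred) ∧
         (∀ f ∈ c.bodyEDB, (⟨f.rel, f.args.map v⟩ : Fact) ∈ I)) →
        ∃ a ∈ c.headDisjuncts, v a.var ∈ X a.pred

end DDLogPaper

/-!
The instance `J` is an "explosion" of `I`. For every set `B` of at most `s` constants of `I`
take `q` copies of the facts of `I` over `B`, and rename each constant `a` in a copy `p` to
the pair `⟨a, ω p a⟩` with a colour `ω p a < M`; then discard every copy lying on a cycle of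
length at most `g` of copies linked by shared constants. Projecting the colours away maps
`J` to `I`, and the surviving copies form a `(1,s)`-decomposition whose aggregate instance
has girth above `g`.

A first-moment count over all colourings `ω`, with `M` large and `q` a large multiple of
`M`, shows that few copies are discarded, while for every bag `B` and every choice of
colour classes occupying a fraction at least `2 ^ (-|IDB|)` of the colours at each constant,
some surviving copy of `B` takes all its colours in these classes. Now let `K` be a model of
`J` without goal. Give every constant `a` of `I` the IDB type carried by most of its
coloured versions in `K`: a rule body instantiated in `I` mentions at most `s` constants,
so it lands in a surviving copy whose constants have exactly these types, and the rule
head can be read off `K`. Hence `I ⊭ Π` as well.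
-/

theorem List.Nodup.getD_ne_getD {l : List ℕ} (hl : l.Nodup) {j k : ℕ} (hj : j < l.length)
    (hk : k < l.length) (hjk : j ≠ k) : l.getD j 0 ≠ l.getD k 0 := by
  rw [List.getD_eq_getElem _ _ hj, List.getD_eq_getElem _ _ hk]
  exact fun h => hjk ((hl.getElem_inj_iff).mp h)

namespace DDLogPaper

open Finset

def Fact.map (h : Const → Const) (f : Fact) : Fact := ⟨f.rel, f.args.map h⟩

lemma subset_foldr_union {α β : Type*} [DecidableEq β] (f : α → Finset β) {l : List α} {a : α}
    (h : a ∈ l) : f a ⊆ l.foldr (fun x s => f x ∪ s) ∅ := by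
  induction l with
  | nil => cases h
  | cons b l ih =>
    rcases List.mem_cons.mp h with rfl | h
    · exact subset_union_left
    · exact (ih h).trans subset_union_right

lemma Atom.mem_vars {a : Atom} {x : Var} (h : Term.var x ∈ a.args) : x ∈ a.vars :=
  subset_foldr_union Term.varSet h (by simp [Term.varSet])

lemma Rule.vars_subset {ρ : Rule} {a : Atom} (h : a ∈ ρ.atoms) : a.vars ⊆ ρ.vars :=
  subset_foldr_union Atom.vars h

lemma Program.card_vars_le_diameter {P : Program} {ρ : Rule} (hρ : ρ ∈ P.rules) :
    ρ.vars.card ≤ P.diameter :=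
  le_sup (f := fun ρ : Rule => ρ.vars.card) hρ

lemma mem_adom {I : Inst} {f : Fact} {c : Const} (hf : f ∈ I) (hc : c ∈ f.args) :
    c ∈ adom I :=
  mem_biUnion.mpr ⟨f, hf, List.mem_toFinset.mpr hc⟩

lemma Atom.app_comp {a : Atom} (ha : a.constFree) (h v : Var → Const) :
    a.app (h ∘ v) = (a.app v).map h := by
  simp only [Atom.app, Fact.map, List.map_map, Fact.mk.injEq, true_and]
  refine List.map_congr_left fun t ht => ?_
  obtain ⟨x, rfl⟩ := ha t ht
  rfl

lemma Program.models_of_isHom {P : Program} (hcf : P.constFree) {J I : Inst} {h : Const → Const}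
    (hh : IsHom h J I) {t : List Const} (hJ : P.models J t) : P.models I (t.map h) := by
  intro K hIK hK
  refine hJ {f | f.map h ∈ K} (fun f hf => hIK (hh f hf)) fun ρ hρ v hbody => ?_
  have happ : ∀ a ∈ ρ.atoms, a.app (h ∘ v) = (a.app v).map h := fun a ha =>
    Atom.app_comp (hcf ρ hρ a ha) h v
  obtain ⟨a, ha, haK⟩ := hK ρ hρ (h ∘ v) fun a ha => by
    rw [happ a (List.mem_append_right _ ha)]; exact hbody a ha
  exact ⟨a, ha, show (a.app v).map h ∈ K by rw [← happ a (List.mem_append_left _ ha)]; exact haK⟩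

section Transfer

variable {SE : Schema} {P : Program} {s : ℕ} {I J : Inst} {K : Set Fact} {rep h : Const → Const}

lemma Program.mem_IDB_of_mem_head {ρ : Rule} (hρ : ρ ∈ P.rules) {a : Atom} (ha : a ∈ ρ.head) :
    a.rel ∈ P.IDB :=
  mem_insert_of_mem <| mem_biUnion.mpr ⟨ρ, hρ, List.mem_toFinset.mpr (List.mem_map_of_mem ha)⟩

lemma Program.notMem_of_rel_mem_IDB (hP : P.IsDDLog SE) (hI : SE.IsInstance I) {f : Fact}
    (hR : f.rel ∈ P.IDB) : f ∉ I :=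
  fun hf => hP.1 _ hR (hI f hf).1

def SameIDBTypes (P : Program) (K : Set Fact) (h h' : Const → Const) : Prop :=
  ∀ c, ∀ R ∈ P.IDB.erase P.goal, (⟨R, [h c]⟩ : Fact) ∈ K ↔ ⟨R, [h' c]⟩ ∈ K

def pullbackModel (P : Program) (I : Inst) (K : Set Fact) (rep : Const → Const) : Set Fact :=
  {f | f ∈ I ∨ (f.rel ∈ P.IDB.erase P.goal ∧ f.args.length ≤ 1 ∧ f.map rep ∈ K)}

lemma map_mem_iff_of_sameIDBTypes (htype : SameIDBTypes P K h rep) {f : Fact}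
    (hR : f.rel ∈ P.IDB.erase P.goal) (hlen : f.args.length ≤ 1) :
    f.map h ∈ K ↔ f.map rep ∈ K := by
  obtain ⟨R, _ | ⟨c, _ | ⟨d, l⟩⟩⟩ := f
  · exact Iff.rfl
  · exact htype c R hR
  · simp at hlen

lemma app_mem_pullbackModel_iff (hP : P.IsDDLog SE) (hI : SE.IsInstance I)
    (htype : SameIDBTypes P K h rep) {a : Atom} (hcf : a.constFree)
    (hR : a.rel ∈ P.IDB.erase P.goal) (hlen : a.args.length ≤ 1) (v : Var → Const) :
    a.app v ∈ pullbackModel P I K rep ↔ a.app (h ∘ v) ∈ K := by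
  have hlen' : (a.app v).args.length ≤ 1 := by simpa [Atom.app] using hlen
  rw [Atom.app_comp hcf, map_mem_iff_of_sameIDBTypes htype hR hlen']
  refine ⟨?_, fun hK => Or.inr ⟨hR, hlen', hK⟩⟩
  rintro (hI' | ⟨-, -, hK⟩)
  · exact absurd hI' (Program.notMem_of_rel_mem_IDB hP hI (mem_of_mem_erase hR))
  · exact hK

variable (hP : P.IsMDDLog SE) (hcf : P.constFree) (hbool : P.goalArity = 0)
  (hdiam : P.diameter ≤ s) (hI : SE.IsInstance I) (hJK : ↑J ⊆ K)
  (hK : ∀ ρ ∈ P.rules, ρ.holdsIn K) (hgoal : (⟨P.goal, []⟩ : Fact) ∉ K)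
  (hloc : ∀ B ⊆ adom I, B.card ≤ s → ∃ h : Const → Const,
    (∀ f ∈ I, (∀ c ∈ f.args, c ∈ B) → f.map h ∈ J) ∧ SameIDBTypes P K h rep)
include hP hcf hbool hdiam hI hJK hK hgoal hloc

lemma holdsIn_pullbackModel {ρ : Rule} (hρ : ρ ∈ P.rules) :
    ρ.holdsIn (pullbackModel P I K rep) := by
  intro v hbody
  obtain ⟨-, -, hbng, -, hglar, -⟩ := hP.1.2 ρ hρ
  have hB : ((adom I).filter (· ∈ ρ.vars.image v)).card ≤ s :=
    (card_le_card fun _ hc => (mem_filter.mp hc).2).trans <| card_image_le.trans <|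
      (Program.card_vars_le_diameter hρ).trans hdiam
  obtain ⟨h, hJ, htype⟩ := hloc _ (filter_subset _ _) hB
  have hbodyK : ∀ a ∈ ρ.body, a.app (h ∘ v) ∈ K := by
    intro a ha
    have ha' : a ∈ ρ.atoms := List.mem_append_right _ ha
    by_cases hR : a.rel ∈ P.IDB
    · have hRU : a.rel ∈ P.IDB.erase P.goal := mem_erase.mpr ⟨hbng a ha, hR⟩
      exact (app_mem_pullbackModel_iff hP.1 hI htype (hcf ρ hρ a ha') hRU
        (hP.2 ρ hρ a ha' hR (hbng a ha)) v).mp (hbody a ha)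
    · have haI : a.app v ∈ I := (hbody a ha).resolve_right
        fun h' => hR (mem_of_mem_erase h'.1)
      rw [Atom.app_comp (hcf ρ hρ a ha')]
      refine hJK (hJ _ haI fun c hc => mem_filter.mpr ⟨mem_adom haI hc, ?_⟩)
      obtain ⟨t, ht, rfl⟩ := List.mem_map.mp hc
      obtain ⟨x, rfl⟩ := hcf ρ hρ a ha' t ht
      exact mem_image_of_mem v (Rule.vars_subset ha' (Atom.mem_vars ht))
  obtain ⟨a, ha, haK⟩ := hK ρ hρ (h ∘ v) hbodyK
  have ha' : a ∈ ρ.atoms := List.mem_append_left _ ha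
  have hR := Program.mem_IDB_of_mem_head hρ ha
  by_cases hgoalR : a.rel = P.goal
  · have hnil : a.args = [] := List.length_eq_zero_iff.mp (hbool ▸ hglar a ha' hgoalR)
    exact absurd (by simpa [Atom.app, hnil, hgoalR] using haK) hgoal
  · exact ⟨a, ha, (app_mem_pullbackModel_iff hP.1 hI htype (hcf ρ hρ a ha')
      (mem_erase.mpr ⟨hgoalR, hR⟩) (hP.2 ρ hρ a ha' hR hgoalR) v).mpr haK⟩

theorem not_models_of_local_homs : ¬ P.models I [] := fun hmodels =>
  (hmodels _ (fun _ hf => Or.inl hf)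
    fun _ hρ => holdsIn_pullbackModel hP hcf hbool hdiam hI hJK hK hgoal hloc hρ).elim
    (Program.notMem_of_rel_mem_IDB hP.1 hI (mem_insert_self _ _))
    fun h => notMem_erase _ _ h.1

end Transfer

lemma val_finRotate {n : ℕ} (i : Fin n) : (finRotate n i : ℕ) = (i + 1) % n := by
  obtain ⟨k, rfl⟩ : ∃ k, n = k + 1 := ⟨n - 1, by have := i.pos; omega⟩
  rw [finRotate_apply, Fin.val_add]
  rcases k with _ | k <;> simp

/-- Such functions are determined by their values off the `y i`. -/
lemma card_filter_agree_mul_pow_le {P A β : Type*} [Fintype P] [Fintype A] [Fintype β]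
    [DecidableEq P] [DecidableEq A] [DecidableEq β] {n : ℕ} (x y : Fin n → P × A)
    (hy : Function.Injective y) (hxy : ∀ i j, x i ≠ y j) :
    #{f : P → A → β | ∀ i, f (x i).1 (x i).2 = f (y i).1 (y i).2} * Fintype.card β ^ n ≤
      Fintype.card (P → A → β) := by
  set Y := univ.image y
  set S : Finset (P → A → β) := {f | ∀ i, f (x i).1 (x i).2 = f (y i).1 (y i).2}
  have hY : #Y = n := by rw [card_image_of_injective _ hy, card_univ, Fintype.card_fin]
  have hinj : Set.InjOn (fun f : P → A → β => fun z : {z // z ∉ Y} => f z.1.1 z.1.2) S := by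
    intro f hf f' hf' h
    replace hf := (mem_filter.mp hf).2
    replace hf' := (mem_filter.mp hf').2
    have hoff : ∀ z ∉ Y, f z.1 z.2 = f' z.1 z.2 := fun z hz => congrFun h ⟨z, hz⟩
    funext a b
    by_cases hab : (a, b) ∈ Y
    · obtain ⟨i, -, hi⟩ := mem_image.mp hab
      have hx : x i ∉ Y := fun hx => by
        obtain ⟨j, -, hj⟩ := mem_image.mp hx
        exact hxy i j hj.symm
      rw [show a = (y i).1 by rw [hi], show b = (y i).2 by rw [hi], ← hf i, ← hf' i,
        hoff _ hx]
    · exact hoff _ hab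
  have hle := card_le_card_of_injOn _ (fun _ _ => mem_univ _) hinj
  rw [card_univ, Fintype.card_fun, Fintype.card_subtype_compl, Fintype.card_coe, hY,
    Fintype.card_prod] at hle
  have hn : n ≤ Fintype.card P * Fintype.card A := by
    rw [← hY, ← Fintype.card_prod]; exact card_le_univ _
  calc _ ≤ Fintype.card β ^ (Fintype.card P * Fintype.card A - n) * Fintype.card β ^ n :=
        Nat.mul_le_mul_right _ hle
    _ = Fintype.card (P → A → β) := by
        rw [← pow_add, Nat.sub_add_cancel hn, Fintype.card_fun, Fintype.card_fun, ← pow_mul,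
          Nat.mul_comm]

lemma two_mul_pow_succ_le (k : ℕ) : 2 * k ^ (k + 1) ≤ (k + 1) ^ (k + 1) := by
  have h := pow_add_mul_le_add_pow (a := k) (b := 1) (Nat.zero_le _) (Nat.zero_le _) (k + 1)
  have h' : k ^ (k + 1) ≤ (k + 1) * k ^ k := by rw [pow_succ, Nat.mul_comm]; gcongr; omega
  simp only [Nat.add_sub_cancel, mul_one, Nat.cast_id] at h
  omega

lemma card_subsets_card_le (q W : ℕ) :
    #{H : Finset (Fin q) | #H ≤ W} ≤ (W + 1) * (q + 1) ^ W := by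
  calc _ ≤ #((range (W + 1)).biUnion fun i => powersetCard i (univ : Finset (Fin q))) :=
        card_le_card fun H hH => mem_biUnion.mpr ⟨#H, mem_range.mpr (Nat.lt_succ_of_le
          (mem_filter.mp hH).2), mem_powersetCard.mpr ⟨subset_univ _, rfl⟩⟩
    _ ≤ ∑ i ∈ range (W + 1), #(powersetCard i (univ : Finset (Fin q))) := card_biUnion_le
    _ ≤ ∑ _i ∈ range (W + 1), (q + 1) ^ W := sum_le_sum fun i hi => by
        rw [card_powersetCard, card_univ, Fintype.card_fin]
        exact (Nat.choose_le_pow q i).trans <| (Nat.pow_le_pow_left (Nat.le_succ q) i).trans <|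
          Nat.pow_le_pow_right (Nat.succ_pos q) (Nat.lt_succ_iff.mp (mem_range.mp hi))
    _ = _ := by rw [sum_const, card_range, smul_eq_mul]

lemma card_piFinset_ite {X α : Type*} [Fintype X] [DecidableEq X] [Fintype α] [DecidableEq α]
    (S : Finset X) (T : Finset α) :
    #(Fintype.piFinset fun x => if x ∈ S then T else univ) =
      #T ^ #S * Fintype.card α ^ (Fintype.card X - #S) := by
  rw [Fintype.card_piFinset]
  simp only [apply_ite card, card_univ]
  rw [prod_ite, prod_const, prod_const, filter_mem_eq_inter, univ_inter, filter_not,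
    filter_mem_eq_inter, univ_inter, card_univ_sdiff]

lemma two_mul_card_compl_pow_le {α : Type*} [Fintype α] [DecidableEq α] {G : Finset α} {K : ℕ}
    (hK : 0 < K) (hG : Fintype.card α ≤ K * #G) : 2 * #Gᶜ ^ K ≤ Fintype.card α ^ K := by
  obtain ⟨k, rfl⟩ : ∃ k, K = k + 1 := ⟨K - 1, by omega⟩
  have hb : (k + 1) * #Gᶜ ≤ k * Fintype.card α := by
    rw [card_compl, Nat.mul_sub, Nat.sub_le_iff_le_add]
    linarith
  refine Nat.le_of_mul_le_mul_left ?_ (pow_pos hK (k + 1))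
  calc (k + 1) ^ (k + 1) * (2 * #Gᶜ ^ (k + 1)) = 2 * ((k + 1) * #Gᶜ) ^ (k + 1) := by
        rw [mul_pow]; ring
    _ ≤ 2 * (k * Fintype.card α) ^ (k + 1) := by gcongr
    _ = 2 * k ^ (k + 1) * Fintype.card α ^ (k + 1) := by ring
    _ ≤ (k + 1) ^ (k + 1) * Fintype.card α ^ (k + 1) := by gcongr; exact two_mul_pow_succ_le k

lemma card_piFinset_compl_mul_two_pow_le {X α : Type*} [Fintype X] [DecidableEq X] [Fintype α]
    [DecidableEq α] {G : Finset α} {K r : ℕ} (hK : 0 < K) (hG : Fintype.card α ≤ K * #G)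
    {S : Finset X} (hS : K * r ≤ #S) :
    #(Fintype.piFinset fun x => if x ∈ S then Gᶜ else univ) * 2 ^ r ≤
      Fintype.card α ^ Fintype.card X := by
  set m := Fintype.card α
  have hSX : #S ≤ Fintype.card X := card_le_univ S
  have hsplit : #Gᶜ ^ #S = (#Gᶜ ^ K) ^ r * #Gᶜ ^ (#S - K * r) := by
    rw [← pow_mul, ← pow_add, Nat.add_sub_cancel' hS]
  rw [card_piFinset_ite]
  calc #Gᶜ ^ #S * m ^ (Fintype.card X - #S) * 2 ^ r
      = (2 * #Gᶜ ^ K) ^ r * #Gᶜ ^ (#S - K * r) * m ^ (Fintype.card X - #S) := by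
        rw [hsplit, mul_pow]; ring
    _ ≤ (m ^ K) ^ r * m ^ (#S - K * r) * m ^ (Fintype.card X - #S) := by
        gcongr
        · exact two_mul_card_compl_pow_le hK hG
        · exact card_le_univ _
    _ = m ^ Fintype.card X := by
        rw [← pow_mul, ← pow_add, ← pow_add]
        congr 1
        omega

lemma card_few_hits_mul_two_pow_le {X α : Type*} [Fintype X] [DecidableEq X] [Fintype α]
    [DecidableEq α] {q : ℕ} (e : Fin q ↪ X) (G : Finset α) {K r W : ℕ} (hK : 0 < K)
    (hG : Fintype.card α ≤ K * #G) (hq : K * r + W ≤ q) :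
    #{g : X → α | #{j | g (e j) ∈ G} ≤ W} * 2 ^ r ≤
      (W + 1) * (q + 1) ^ W * Fintype.card α ^ Fintype.card X := by
  set E : Finset (Fin q) → Finset (X → α) := fun H =>
    Fintype.piFinset fun x => if x ∈ Hᶜ.map e then Gᶜ else univ
  set small : Finset (Finset (Fin q)) := {H | #H ≤ W}
  have hcover : ({g | #{j | g (e j) ∈ G} ≤ W} : Finset (X → α)) ⊆ small.biUnion E := by
    intro g hg
    refine mem_biUnion.mpr ⟨_, mem_filter.mpr ⟨mem_univ _, (mem_filter.mp hg).2⟩, ?_⟩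
    refine Fintype.mem_piFinset.mpr fun x => ?_
    split_ifs with hx
    · obtain ⟨j, hj, rfl⟩ := mem_map.mp hx
      simpa using hj
    · exact mem_univ _
  have hE : ∀ H ∈ small, #(E H) * 2 ^ r ≤ Fintype.card α ^ Fintype.card X := fun H hH =>
    card_piFinset_compl_mul_two_pow_le hK hG <| by
      rw [card_map, card_compl, Fintype.card_fin]
      have := (mem_filter.mp hH).2
      omega
  calc _ ≤ (∑ H ∈ small, #(E H)) * 2 ^ r :=
        Nat.mul_le_mul_right _ ((card_le_card hcover).trans card_biUnion_le)
    _ ≤ ∑ _H ∈ small, Fintype.card α ^ Fintype.card X := by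
        rw [sum_mul]
        exact sum_le_sum hE
    _ ≤ _ := by
        rw [sum_const, smul_eq_mul]
        exact Nat.mul_le_mul_right _ (card_subsets_card_le q W)

lemma exists_mul_pow_le_four_pow (E W : ℕ) : ∃ M, 0 < M ∧ W ≤ M ∧ E * M ^ W ≤ 4 ^ M := by
  have hlim := (tendsto_pow_const_div_const_pow_of_one_lt W (by norm_num : (1 : ℝ) < 4)).eventually
    (gt_mem_nhds (show (0 : ℝ) < 1 / (E + 1) by positivity))
  obtain ⟨M, hM, hWM⟩ := (hlim.and (Filter.eventually_ge_atTop (W + 1))).exists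
  refine ⟨M, by omega, by omega, ?_⟩
  rw [div_lt_div_iff₀ (by positivity) (by positivity), one_mul] at hM
  have : (E : ℝ) * M ^ W ≤ 4 ^ M := by nlinarith [pow_nonneg (Nat.cast_nonneg M : (0 : ℝ) ≤ M) W]
  exact_mod_cast this

lemma exists_le_mul_card_fiber {α β : Type*} [Fintype α] [DecidableEq β] (f : α → β)
    {t : Finset β} (ht : t.Nonempty) (hf : ∀ a, f a ∈ t) :
    ∃ y, Fintype.card α ≤ #t * #{a | f a = y} := by
  obtain ⟨y, -, hy⟩ := exists_le_card_fiber_of_nsmul_le_card_of_maps_to (s := univ)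
    (fun a _ => hf a) ht (b := (Fintype.card α : ℚ) / #t)
    (by rw [nsmul_eq_mul, mul_div_cancel₀ _ (by exact_mod_cast ht.card_pos.ne'), card_univ])
  refine ⟨y, ?_⟩
  rw [div_le_iff₀ (by exact_mod_cast ht.card_pos), mul_comm] at hy
  exact_mod_cast hy

section Explosion

variable {I : Inst} {s q M G : ℕ}

def bags (I : Inst) (s : ℕ) : Finset (Finset Const) := (adom I).powerset.filter (·.card ≤ s)

abbrev Piece (I : Inst) (s q : ℕ) := Fin q × bags I s

abbrev Colouring (I : Inst) (s q M : ℕ) := Piece I s q → adom I → Fin M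

def tag (col : adom I → Fin M) (c : Const) : Const :=
  Nat.pair c (if h : c ∈ adom I then col ⟨c, h⟩ else 0)

def copy (ω : Colouring I s q M) (p : Piece I s q) : Inst :=
  {f ∈ I | ∀ c ∈ f.args, c ∈ (p.2 : Finset Const)}.image (Fact.map (tag (ω p)))

def copyDom (ω : Colouring I s q M) (p : Piece I s q) : Finset Const :=
  (p.2 : Finset Const).image (tag (ω p))

/-- `(p, a)` describes a closed walk through the pieces `p 0, p 1, …`, where the step from
`p i` to `p (i + 1)` goes through the constant `a i`. -/
abbrev Pattern (I : Inst) (s q n : ℕ) := (Fin n → Piece I s q) × (Fin n → adom I)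

def IsCycle {n : ℕ} (pat : Pattern I s q n) : Prop :=
  Function.Injective pat.1 ∧ ∀ i, pat.2 (finRotate n i) ≠ pat.2 i

def IsRealized (ω : Colouring I s q M) {n : ℕ} (pat : Pattern I s q n) : Prop :=
  ∀ i, ω (pat.1 i) (pat.2 i) = ω (pat.1 (finRotate n i)) (pat.2 i)

instance {n : ℕ} (pat : Pattern I s q n) : Decidable (IsCycle pat) :=
  inferInstanceAs (Decidable (_ ∧ _))

instance (ω : Colouring I s q M) {n : ℕ} (pat : Pattern I s q n) :
    Decidable (IsRealized ω pat) :=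
  inferInstanceAs (Decidable (∀ _, _))

def realizedCycles (ω : Colouring I s q M) (n : ℕ) : Finset (Pattern I s q n) :=
  {pat | IsCycle pat ∧ IsRealized ω pat}

def dirty (G : ℕ) (ω : Colouring I s q M) : Finset (Piece I s q) :=
  (Icc 1 G).biUnion fun n => (realizedCycles ω n).biUnion fun pat => univ.image pat.1

def survivors (G : ℕ) (ω : Colouring I s q M) : Finset (Piece I s q) :=
  univ \ dirty G ω

def explosion (G : ℕ) (ω : Colouring I s q M) : Inst :=
  (survivors G ω).biUnion (copy ω)

lemma mem_bags {B : Finset Const} : B ∈ bags I s ↔ B ⊆ adom I ∧ B.card ≤ s := by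
  simp [bags]

lemma tag_coe (col : adom I → Fin M) (a : adom I) : tag col a = Nat.pair a (col a) := by
  simp [tag]

lemma unpair_tag (col : adom I → Fin M) (c : Const) : (tag col c).unpair.1 = c := by
  simp [tag]

lemma mem_copy {ω : Colouring I s q M} {p : Piece I s q} {f : Fact} :
    f ∈ copy ω p ↔
      ∃ f₀ ∈ I, (∀ c ∈ f₀.args, c ∈ (p.2 : Finset Const)) ∧ f₀.map (tag (ω p)) = f := by
  simp [copy, and_assoc]

lemma mem_explosion {ω : Colouring I s q M} {f : Fact} :
    f ∈ explosion G ω ↔ ∃ p ∈ survivors G ω, f ∈ copy ω p :=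
  mem_biUnion

lemma exists_shared_of_mem_copyDom {ω : Colouring I s q M} {p p' : Piece I s q} {c : Const}
    (h : c ∈ copyDom ω p) (h' : c ∈ copyDom ω p') :
    ∃ a : adom I, c = tag (ω p) a ∧ ω p a = ω p' a := by
  obtain ⟨a, ha, rfl⟩ := mem_image.mp h
  obtain ⟨a', ha', heq⟩ := mem_image.mp h'
  have hA := (mem_bags.mp p.2.2).1 ha
  have hA' := (mem_bags.mp p'.2.2).1 ha'
  rw [tag_coe _ ⟨a, hA⟩, tag_coe _ ⟨a', hA'⟩, Nat.pair_eq_pair] at heq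
  obtain ⟨rfl, hcol⟩ := heq
  exact ⟨⟨a', hA⟩, tag_coe _ ⟨a', hA⟩ ▸ rfl, Fin.ext hcol.symm⟩

lemma notMem_survivors_of_cycle {ω : Colouring I s q M} {n : ℕ} (hn : n ≤ G)
    {p : Fin n → Piece I s q} (hp : Function.Injective p) {c : Fin n → Const}
    (hc : ∀ i, c i ∈ copyDom ω (p i) ∧ c i ∈ copyDom ω (p (finRotate n i)))
    (hne : ∀ i, c (finRotate n i) ≠ c i) (i : Fin n) : p i ∉ survivors G ω := by
  choose a ha hcol using fun i => exists_shared_of_mem_copyDom (hc i).1 (hc i).2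
  have hcyc : (p, a) ∈ realizedCycles ω n := by
    simp only [realizedCycles, mem_filter, mem_univ, true_and]
    refine ⟨⟨hp, fun j h => hne j ?_⟩, hcol⟩
    rw [ha, ha, show a (finRotate n j) = a j from h, tag_coe, tag_coe, hcol j]
  simp only [survivors, dirty, mem_sdiff, mem_univ, true_and, not_not, mem_biUnion]
  exact ⟨n, mem_Icc.mpr ⟨i.pos, hn⟩, (p, a), hcyc, mem_image_of_mem _ (mem_univ i)⟩

end Explosion

section Decomposition

variable {I : Inst} {s q M G : ℕ} {ω : Colouring I s q M}

noncomputable def pieceIndex (p : Piece I s q) : ℕ := Fintype.equivFin _ p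

lemma pieceIndex_injective : Function.Injective (pieceIndex (I := I) (s := s) (q := q)) :=
  Fin.val_injective.comp (Fintype.equivFin _).injective

noncomputable def partOf (G : ℕ) (ω : Colouring I s q M) (f : Fact) : ℕ :=
  if h : ∃ p ∈ survivors G ω, f ∈ copy ω p then pieceIndex h.choose else 0

lemma partOf_spec {f : Fact} (hf : f ∈ explosion G ω) :
    ∃ p ∈ survivors G ω, partOf G ω f = pieceIndex p ∧ f ∈ copy ω p := by
  have h := mem_explosion.mp hf
  exact ⟨h.choose, h.choose_spec.1, by rw [partOf, dif_pos h], h.choose_spec.2⟩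

lemma exists_of_mem_image_partOf {v : ℕ} (hv : v ∈ (explosion G ω).image (partOf G ω)) :
    ∃ p ∈ survivors G ω, v = pieceIndex p := by
  obtain ⟨f, hf, rfl⟩ := mem_image.mp hv
  obtain ⟨p, hp, hfp, -⟩ := partOf_spec hf
  exact ⟨p, hp, hfp⟩

lemma adom_partInst_subset_copyDom (p : Piece I s q) :
    adom (partInst (explosion G ω) (partOf G ω) (pieceIndex p)) ⊆ copyDom ω p := by
  intro c hc
  obtain ⟨f, hf, hcf⟩ := mem_biUnion.mp hc
  obtain ⟨hfJ, hfp⟩ := mem_filter.mp hf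
  obtain ⟨p', -, hp', hfp'⟩ := partOf_spec hfJ
  obtain rfl := pieceIndex_injective (hfp.symm.trans hp')
  obtain ⟨f₀, -, hargs, rfl⟩ := mem_copy.mp hfp'
  obtain ⟨c₀, hc₀, rfl⟩ := List.mem_map.mp (List.mem_toFinset.mp hcf)
  exact mem_image_of_mem _ (hargs c₀ hc₀)

lemma isDecompOf_explosion (hG : 2 ≤ G) : IsDecompOf (explosion G ω) (partOf G ω) s := by
  constructor
  · intro v hv
    obtain ⟨p, -, rfl⟩ := exists_of_mem_image_partOf hv
    exact (card_le_card (adom_partInst_subset_copyDom p)).trans <|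
      card_image_le.trans (mem_bags.mp p.2.2).2
  · intro v w hv hw hvw
    obtain ⟨p, hp, rfl⟩ := exists_of_mem_image_partOf hv
    obtain ⟨p', -, rfl⟩ := exists_of_mem_image_partOf hw
    by_contra! hgt
    obtain ⟨c₁, hc₁, c₂, hc₂, hne⟩ := one_lt_card.mp hgt
    have hmem : ∀ c ∈ adom (partInst (explosion G ω) (partOf G ω) (pieceIndex p)) ∩
        adom (partInst (explosion G ω) (partOf G ω) (pieceIndex p')),
        c ∈ copyDom ω p ∧ c ∈ copyDom ω p' := fun c hc =>
      ⟨adom_partInst_subset_copyDom p (mem_inter.mp hc).1,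
        adom_partInst_subset_copyDom p' (mem_inter.mp hc).2⟩
    have hpp : p ≠ p' := fun h => hvw (congrArg pieceIndex h)
    refine notMem_survivors_of_cycle (n := 2) hG (p := ![p, p'])
      (c := ![c₁, c₂]) ?_ ?_ ?_ 0 hp
    · intro i j hij
      fin_cases i <;> fin_cases j <;> simp_all [eq_comm]
    · intro i
      fin_cases i
      · exact hmem c₁ hc₁
      · exact (hmem c₂ hc₂).symm
    · intro i
      fin_cases i
      · exact Ne.symm hne
      · exact hne

lemma girthGT_decompInst_explosion : GirthGT (decompInst (explosion G ω) (partOf G ω)) G := by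
  rintro n hn ⟨hpos, f, pos, pos', hmem, hdist, hpos', hchain⟩
  have hf : ∀ i : Fin n, ∃ p ∈ survivors G ω, f i = ⟨pieceIndex p,
      (adom (partInst (explosion G ω) (partOf G ω) (pieceIndex p))).sort (· ≤ ·)⟩ := by
    intro i
    obtain ⟨v, hv, hfv⟩ := mem_image.mp (hmem i i.isLt)
    obtain ⟨p, hp, rfl⟩ := exists_of_mem_image_partOf hv
    exact ⟨p, hp, hfv.symm⟩
  choose p hp hfp using hf
  have hnodup : ∀ i : Fin n, (f i).args.Nodup := fun i => hfp i ▸ sort_nodup _ _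
  have hdom : ∀ (i : Fin n) (k : ℕ), k < (f i).args.length →
      (f i).args.getD k 0 ∈ copyDom ω (p i) := by
    intro i k hk
    have hmem := List.getD_eq_getElem _ 0 hk ▸ List.getElem_mem hk
    rw [hfp i] at hmem ⊢
    exact adom_partInst_subset_copyDom _ ((mem_sort _).mp hmem)
  have hlink : ∀ i : Fin n, (f i).args.getD (pos' i) 0 =
      (f (finRotate n i)).args.getD (pos (finRotate n i)) 0 := by
    intro i
    have h := hchain i i.isLt
    rwa [← val_finRotate] at h
  refine notMem_survivors_of_cycle hn (p := p) (c := fun i => (f i).args.getD (pos' i) 0)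
    (fun i j h => Fin.ext (hdist i j i.isLt j.isLt (by rw [hfp i, hfp j, h]))) (fun i => ?_)
    (fun i => ?_) ⟨0, hpos⟩ (hp _)
  · obtain ⟨-, -, hlt⟩ := hpos' i i.isLt
    obtain ⟨-, hlt', -⟩ := hpos' _ (finRotate n i).isLt
    exact ⟨hdom i _ hlt, hlink i ▸ hdom _ _ hlt'⟩
  · obtain ⟨hne, hlt, hlt'⟩ := hpos' _ (finRotate n i).isLt
    exact hlink i ▸ (hnodup _).getD_ne_getD hlt' hlt hne.symm

lemma isInstance_explosion {SE : Schema} (hI : SE.IsInstance I) :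
    SE.IsInstance (explosion G ω) := by
  intro f hf
  obtain ⟨p, -, hfp⟩ := mem_explosion.mp hf
  obtain ⟨f₀, hf₀, -, rfl⟩ := mem_copy.mp hfp
  simpa [Fact.map] using hI f₀ hf₀

lemma isHom_explosion : IsHom (fun c => c.unpair.1) (explosion G ω) I := by
  intro f hf
  obtain ⟨p, -, hfp⟩ := mem_explosion.mp hf
  obtain ⟨f₀, hf₀, -, rfl⟩ := mem_copy.mp hfp
  simpa [Fact.map, Function.comp_def, unpair_tag] using hf₀

end Decomposition

section Richness

variable {I : Inst} {s q M G C : ℕ}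

lemma card_isRealized_mul_pow_le {n : ℕ} {pat : Pattern I s q n} (hpat : IsCycle pat) :
    #{ω : Colouring I s q M | IsRealized ω pat} * M ^ n ≤
      Fintype.card (Colouring I s q M) := by
  have := card_filter_agree_mul_pow_le (β := Fin M) (fun i => (pat.1 i, pat.2 i))
    (fun i => (pat.1 (finRotate n i), pat.2 i))
    (fun i j h => (finRotate n).injective (hpat.1 (congrArg Prod.fst h)))
    (fun i j h => by
      obtain ⟨h1, h2⟩ := Prod.mk.inj h
      obtain rfl := hpat.1 h1
      exact hpat.2 j h2)
  rw [Fintype.card_fin] at this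
  exact this

lemma sum_card_realizedCycles_mul_pow_le (n : ℕ) :
    (∑ ω : Colouring I s q M, #(realizedCycles ω n)) * M ^ n ≤
      (Fintype.card (Piece I s q) * Fintype.card (adom I)) ^ n *
        Fintype.card (Colouring I s q M) := by
  classical
  have hswap : ∑ ω : Colouring I s q M, #(realizedCycles ω n) =
      ∑ pat : Pattern I s q n, #{ω : Colouring I s q M | IsCycle pat ∧ IsRealized ω pat} := by
    simp only [realizedCycles, card_filter]
    exact sum_comm
  have hpat : ∀ pat : Pattern I s q n,
      #{ω : Colouring I s q M | IsCycle pat ∧ IsRealized ω pat} * M ^ n ≤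
        Fintype.card (Colouring I s q M) := by
    intro pat
    by_cases hc : IsCycle pat
    · simpa only [hc, true_and] using card_isRealized_mul_pow_le hc
    · simp [hc]
  calc _ = ∑ pat : Pattern I s q n,
        #{ω : Colouring I s q M | IsCycle pat ∧ IsRealized ω pat} * M ^ n := by
        rw [hswap, sum_mul]
    _ ≤ ∑ _pat : Pattern I s q n, Fintype.card (Colouring I s q M) :=
        sum_le_sum fun pat _ => hpat pat
    _ = _ := by
        simp [Fintype.card_prod, mul_pow]

lemma card_dirty_le (ω : Colouring I s q M) :
    #(dirty G ω) ≤ G * ∑ n ∈ Icc 1 G, #(realizedCycles ω n) := by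
  rw [mul_sum]
  refine card_biUnion_le.trans (sum_le_sum fun n hn => card_biUnion_le.trans ?_)
  calc _ ≤ ∑ _pat ∈ realizedCycles ω n, G := sum_le_sum fun pat _ =>
        card_image_le.trans ((card_univ.trans (Fintype.card_fin n)).le.trans (mem_Icc.mp hn).2)
    _ = _ := by rw [sum_const, smul_eq_mul, Nat.mul_comm]

def IsRich (C G : ℕ) (ω : Colouring I s q M) : Prop :=
  ∀ (B : bags I s) (SS : adom I → Finset (Fin M)), (∀ a, M ≤ C * #(SS a)) →
    ∃ j, (j, B) ∈ survivors G ω ∧ ∀ a, ω (j, B) a ∈ SS a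

lemma card_few_hits_colouring_mul_two_pow_le (hC : 0 < C) (B : bags I s)
    {SS : adom I → Finset (Fin M)} (hSS : ∀ a, M ≤ C * #(SS a)) {r W : ℕ}
    (hq : C ^ Fintype.card (adom I) * r + W ≤ q) :
    #{ω : Colouring I s q M | #{j | ∀ a, ω (j, B) a ∈ SS a} ≤ W} * 2 ^ r ≤
      (W + 1) * (q + 1) ^ W * Fintype.card (Colouring I s q M) := by
  have hdens : Fintype.card (adom I → Fin M) ≤
      C ^ Fintype.card (adom I) * #(Fintype.piFinset SS) := by
    rw [Fintype.card_piFinset, Fintype.card_fun, Fintype.card_fin]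
    calc M ^ Fintype.card (adom I) = ∏ _a : adom I, M := by simp
      _ ≤ ∏ a, C * #(SS a) := prod_le_prod' fun a _ => hSS a
      _ = _ := by rw [prod_mul_distrib]; simp
  have := card_few_hits_mul_two_pow_le ⟨fun j => ((j, B) : Piece I s q),
    fun _ _ h => (Prod.mk.inj h).1⟩ _ (pow_pos hC _) hdens hq
  rw [show Fintype.card (Colouring I s q M) =
    Fintype.card (adom I → Fin M) ^ Fintype.card (Piece I s q) from Fintype.card_fun]
  convert this using 7
  simp only [Fintype.mem_piFinset]
  rfl

lemma card_poor_mul_two_pow_le (hC : 0 < C) {r W : ℕ}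
    (hq : C ^ Fintype.card (adom I) * r + W ≤ q) :
    #{ω : Colouring I s q M | ∃ (B : bags I s) (SS : adom I → Finset (Fin M)),
        (∀ a, M ≤ C * #(SS a)) ∧ #{j | ∀ a, ω (j, B) a ∈ SS a} ≤ W} * 2 ^ r ≤
      #(bags I s) * 2 ^ (M * Fintype.card (adom I)) *
        ((W + 1) * (q + 1) ^ W * Fintype.card (Colouring I s q M)) := by
  set L : Finset (bags I s × (adom I → Finset (Fin M))) := {BS | ∀ a, M ≤ C * #(BS.2 a)}
  have hcover : ({ω | ∃ (B : bags I s) (SS : adom I → Finset (Fin M)),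
      (∀ a, M ≤ C * #(SS a)) ∧ #{j | ∀ a, ω (j, B) a ∈ SS a} ≤ W} :
        Finset (Colouring I s q M)) ⊆
      L.biUnion fun BS => {ω | #{j | ∀ a, ω (j, BS.1) a ∈ BS.2 a} ≤ W} := by
    intro ω hω
    obtain ⟨B, SS, hSS, hW⟩ := (mem_filter.mp hω).2
    exact mem_biUnion.mpr ⟨(B, SS), mem_filter.mpr ⟨mem_univ _, hSS⟩,
      mem_filter.mpr ⟨mem_univ _, hW⟩⟩
  have hL : #L ≤ #(bags I s) * 2 ^ (M * Fintype.card (adom I)) := by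
    refine (card_le_univ L).trans (le_of_eq ?_)
    rw [Fintype.card_prod, Fintype.card_coe, Fintype.card_fun, Fintype.card_finset,
      Fintype.card_fin, ← pow_mul]
  calc _ ≤ (∑ BS ∈ L, #({ω | #{j | ∀ a, ω (j, BS.1) a ∈ BS.2 a} ≤ W} :
        Finset (Colouring I s q M))) * 2 ^ r :=
        Nat.mul_le_mul_right _ ((card_le_card hcover).trans card_biUnion_le)
    _ ≤ ∑ _BS ∈ L, (W + 1) * (q + 1) ^ W * Fintype.card (Colouring I s q M) := by
        rw [sum_mul]
        exact sum_le_sum fun BS hBS =>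
          card_few_hits_colouring_mul_two_pow_le hC BS.1 (mem_filter.mp hBS).2 hq
    _ ≤ _ := by
        rw [sum_const, smul_eq_mul]
        exact Nat.mul_le_mul_right _ hL

lemma two_mul_card_many_cycles_lt (hM : 0 < M) {Y : ℕ}
    (hY : Fintype.card (Piece I s q) * Fintype.card (adom I) ≤ Y * M) :
    2 * #{ω : Colouring I s q M |
        2 * ∑ n ∈ Icc 1 G, Y ^ n < ∑ n ∈ Icc 1 G, #(realizedCycles ω n)} <
      Fintype.card (Colouring I s q M) := by
  set D := ∑ n ∈ Icc 1 G, Y ^ n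
  set Ω := Fintype.card (Colouring I s q M)
  have hΩ : 0 < Ω := Fintype.card_pos_iff.mpr ⟨fun _ _ => ⟨0, hM⟩⟩
  have hsum : ∑ ω : Colouring I s q M, ∑ n ∈ Icc 1 G, #(realizedCycles ω n) ≤ D * Ω := by
    rw [sum_comm, sum_mul]
    refine sum_le_sum fun n _ => Nat.le_of_mul_le_mul_right ?_ (pow_pos hM n)
    calc _ ≤ _ := sum_card_realizedCycles_mul_pow_le n
      _ ≤ (Y * M) ^ n * Ω := Nat.mul_le_mul_right _ (Nat.pow_le_pow_left hY n)
      _ = Y ^ n * Ω * M ^ n := by ring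
  set bad : Finset (Colouring I s q M) :=
    {ω | 2 * D < ∑ n ∈ Icc 1 G, #(realizedCycles ω n)}
  have hbad : #bad * (2 * D + 1) ≤ D * Ω := by
    calc #bad * (2 * D + 1) ≤ ∑ ω ∈ bad, ∑ n ∈ Icc 1 G, #(realizedCycles ω n) := by
          rw [← smul_eq_mul]
          exact card_nsmul_le_sum _ _ _ fun ω hω => (mem_filter.mp hω).2
      _ ≤ _ := (sum_le_sum_of_subset (subset_univ _)).trans hsum
  nlinarith

lemma isRich_of_card_dirty_lt {ω : Colouring I s q M}
    (h : ∀ (B : bags I s) (SS : adom I → Finset (Fin M)), (∀ a, M ≤ C * #(SS a)) →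
      #(dirty G ω) < #{j | ∀ a, ω (j, B) a ∈ SS a}) : IsRich C G ω := by
  intro B SS hSS
  set e : Fin q ↪ Piece I s q := ⟨fun j => (j, B), fun _ _ h => (Prod.mk.inj h).1⟩
  obtain ⟨p, hp, hpd⟩ := exists_mem_notMem_of_card_lt_card
    ((h B SS hSS).trans_eq (card_map e).symm)
  obtain ⟨j, hj, rfl⟩ := mem_map.mp hp
  exact ⟨j, mem_sdiff.mpr ⟨mem_univ _, hpd⟩, (mem_filter.mp hj).2⟩

lemma exists_isRich_of_le (hC : 0 < C) (hM : 0 < M) {Y r W : ℕ}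
    (hY : Fintype.card (Piece I s q) * Fintype.card (adom I) ≤ Y * M)
    (hW : G * (2 * ∑ n ∈ Icc 1 G, Y ^ n) ≤ W) (hq : C ^ Fintype.card (adom I) * r + W ≤ q)
    (hpow : 2 * #(bags I s) * 2 ^ (M * Fintype.card (adom I)) * ((W + 1) * (q + 1) ^ W) ≤
      2 ^ r) :
    ∃ ω : Colouring I s q M, IsRich C G ω := by
  set Ω := Fintype.card (Colouring I s q M)
  set bad : Finset (Colouring I s q M) :=
    {ω | 2 * ∑ n ∈ Icc 1 G, Y ^ n < ∑ n ∈ Icc 1 G, #(realizedCycles ω n)}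
  set poor : Finset (Colouring I s q M) :=
    {ω | ∃ (B : bags I s) (SS : adom I → Finset (Fin M)),
      (∀ a, M ≤ C * #(SS a)) ∧ #{j | ∀ a, ω (j, B) a ∈ SS a} ≤ W}
  have hbad : 2 * #bad < Ω := two_mul_card_many_cycles_lt hM hY
  have hpoor : 2 * #poor ≤ Ω := by
    refine Nat.le_of_mul_le_mul_right ?_ (pow_pos two_pos r)
    calc 2 * #poor * 2 ^ r = 2 * (#poor * 2 ^ r) := by ring
      _ ≤ 2 * (#(bags I s) * 2 ^ (M * Fintype.card (adom I)) * ((W + 1) * (q + 1) ^ W * Ω)) :=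
          Nat.mul_le_mul_left 2 (card_poor_mul_two_pow_le hC hq)
      _ = 2 * #(bags I s) * 2 ^ (M * Fintype.card (adom I)) * ((W + 1) * (q + 1) ^ W) * Ω := by
          ring
      _ ≤ 2 ^ r * Ω := Nat.mul_le_mul_right _ hpow
      _ = Ω * 2 ^ r := by ring
  have hlt : #(bad ∪ poor) < #(univ : Finset (Colouring I s q M)) := by
    rw [card_univ]
    change _ < Ω
    clear_value Ω bad poor
    exact (card_union_le _ _).trans_lt (by omega)
  obtain ⟨ω, -, hω⟩ := exists_mem_notMem_of_card_lt_card hlt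
  obtain ⟨hω₁, hω₂⟩ := not_or.mp (mt mem_union.mpr hω)
  refine ⟨ω, isRich_of_card_dirty_lt fun B SS hSS => ?_⟩
  have h₁ : ∑ n ∈ Icc 1 G, #(realizedCycles ω n) ≤ 2 * ∑ n ∈ Icc 1 G, Y ^ n :=
    not_lt.mp fun h => hω₁ (mem_filter.mpr ⟨mem_univ _, h⟩)
  have h₂ : W < #{j | ∀ a, ω (j, B) a ∈ SS a} :=
    not_le.mp fun h => hω₂ (mem_filter.mpr ⟨mem_univ _, B, SS, hSS, h⟩)
  exact (card_dirty_le ω).trans_lt (((Nat.mul_le_mul_left G h₁).trans hW).trans_lt h₂)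

end Richness

/-- The constraints on `q` and `M` are met by taking `q` linear in `M` and then `M` large,
since they require only a polynomial in `M` to stay below `4 ^ M`. -/
theorem exists_isRich (I : Inst) (s G : ℕ) {C : ℕ} (hC : 0 < C) :
    ∃ q M, 0 < M ∧ ∃ ω : Colouring I s q M, IsRich C G ω := by
  set nA := Fintype.card (adom I)
  set NB := #(bags I s)
  set c := C ^ nA * (nA + 2) + 1 with hc
  set Y := c * NB * nA with hY
  set W := G * (2 * ∑ n ∈ Icc 1 G, Y ^ n)
  obtain ⟨M, hM, hWM, hpoly⟩ := exists_mul_pow_le_four_pow (2 * NB * (W + 1) * (c + 1) ^ W) W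
  set r := M * (nA + 2) with hr
  set q := C ^ nA * r + W with hq
  have hqc : q ≤ c * M := by
    calc q = C ^ nA * (nA + 2) * M + W := by rw [hq, hr]; ring
      _ ≤ C ^ nA * (nA + 2) * M + M := by omega
      _ = c * M := by rw [hc]; ring
  refine ⟨q, M, hM, exists_isRich_of_le hC hM ?_ le_rfl le_rfl ?_⟩
  · rw [Fintype.card_prod, Fintype.card_fin, Fintype.card_coe]
    calc q * NB * nA ≤ c * M * NB * nA := by gcongr
      _ = Y * M := by rw [hY]; ring
  · have hq1 : (q + 1) ^ W ≤ (c + 1) ^ W * M ^ W := by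
      rw [← mul_pow]; exact Nat.pow_le_pow_left (by nlinarith) W
    calc 2 * NB * 2 ^ (M * nA) * ((W + 1) * (q + 1) ^ W)
        = 2 ^ (M * nA) * (2 * NB * (W + 1)) * (q + 1) ^ W := by ring
      _ ≤ 2 ^ (M * nA) * (2 * NB * (W + 1)) * ((c + 1) ^ W * M ^ W) :=
          Nat.mul_le_mul_left _ hq1
      _ = 2 ^ (M * nA) * (2 * NB * (W + 1) * (c + 1) ^ W * M ^ W) := by ring
      _ ≤ 2 ^ (M * nA) * 4 ^ M := Nat.mul_le_mul_left _ hpoly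
      _ = 2 ^ r := by
          rw [show (4 : ℕ) = 2 ^ 2 by rfl, ← pow_mul, ← pow_add, hr]; ring_nf

/-- A model of the explosion gives each constant of `I` the IDB type shared by most of its
`M` coloured versions; richness provides, for every small part of `I`, a surviving copy
whose colours all carry these majority types. -/
theorem models_explosion {SE : Schema} {P : Program} {I : Inst} {s q M G : ℕ}
    (hP : P.IsMDDLog SE) (hcf : P.constFree) (hbool : P.goalArity = 0) (hdiam : P.diameter ≤ s)
    (hI : SE.IsInstance I) (hM : 0 < M) {ω : Colouring I s q M}
    (hrich : IsRich (2 ^ #(P.IDB.erase P.goal)) G ω) (hIP : P.models I []) :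
    P.models (explosion G ω) [] := by
  classical
  intro K hJK hK
  by_contra hgoal
  set U := P.IDB.erase P.goal
  set τ : Const → Finset RelSym := fun c => {R ∈ U | (⟨R, [c]⟩ : Fact) ∈ K}
  have hmaj : ∀ a : adom I, ∃ T, M ≤ 2 ^ #U * #{i : Fin M | τ (Nat.pair a i) = T} := by
    intro a
    simpa [card_powerset] using exists_le_mul_card_fiber (fun i : Fin M => τ (Nat.pair a i))
      (powerset_nonempty U) fun i => mem_powerset.mpr (filter_subset _ _)
  choose T hT using hmaj
  have hrep : ∀ a : adom I, ∃ i : Fin M, τ (Nat.pair a i) = T a := fun a => by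
    obtain ⟨i, hi⟩ := card_pos.mp (Nat.pos_of_mul_pos_left (hM.trans_le (hT a)))
    exact ⟨i, (mem_filter.mp hi).2⟩
  choose rep hrep using hrep
  refine not_models_of_local_homs hP hcf hbool hdiam hI hJK hK hgoal
    (rep := tag rep) (fun B hB hBs => ?_) hIP
  have hBb : B ∈ bags I s := mem_bags.mpr ⟨hB, hBs⟩
  obtain ⟨j, hsurv, hcol⟩ := hrich ⟨B, hBb⟩ _ hT
  refine ⟨tag (ω (j, ⟨B, hBb⟩)), fun f hf hfB =>
    mem_explosion.mpr ⟨_, hsurv, mem_copy.mpr ⟨f, hf, hfB, rfl⟩⟩, fun c R hR => ?_⟩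
  have hτ : τ (tag (ω (j, ⟨B, hBb⟩)) c) = τ (tag rep c) := by
    by_cases hc : c ∈ adom I
    · rw [show c = ((⟨c, hc⟩ : adom I) : Const) from rfl, tag_coe, tag_coe, hrep]
      exact (mem_filter.mp (hcol ⟨c, hc⟩)).2
    · simp [tag, hc]
  have hRU : R ∈ U := hR
  simpa [τ, hRU] using congrArg (R ∈ ·) hτ

end DDLogPaper

open DDLogPaper

theorem statement_9_general (SE : Schema) (I : Inst) (g s : ℕ) (P : Program)
    (hI : SE.IsInstance I)
    (hP : P.IsMDDLog SE) (hcf : P.constFree) (hbool : P.goalArity = 0)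
    (hdiam : P.diameter ≤ s) :
    ∃ J : Inst, SE.IsInstance J ∧ HomTo J I ∧ DecompGirthGT J s g ∧
      (P.models I [] ↔ P.models J []) := by
  obtain ⟨q, M, hM, ω, hrich⟩ := exists_isRich I s (max g 2) (pow_pos two_pos _)
  refine ⟨explosion (max g 2) ω, isInstance_explosion hI, ⟨_, isHom_explosion⟩,
    ⟨partOf (max g 2) ω, isDecompOf_explosion (le_max_right g 2),
      fun n hn => girthGT_decompInst_explosion n (hn.trans (le_max_left g 2))⟩,
    models_explosion hP hcf hbool hdiam hI hM hrich, fun h => ?_⟩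
  simpa using Program.models_of_isHom hcf isHom_explosion h

/-- Lem. 5.4: the explosion lemma for MDDLog: every instance can be
replaced by one of high `(1,s)`-decomposition girth that maps into it and agrees with it
on any given Boolean MDDLog program of diameter at most `s`. -/
theorem statement_9 (SE : Schema) (I : Inst) (g s : ℕ) (P : Program)
    (hI : SE.IsInstance I) (hs : 0 < s) (hsg : s ≤ g)
    (hP : P.IsMDDLog SE) (hcf : P.constFree) (hbool : P.goalArity = 0)
    (hdiam : P.diameter ≤ s) :
    ∃ J : Inst, SE.IsInstance J ∧ HomTo J I ∧ DecompGirthGT J s g ∧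
      (P.models I [] ↔ P.models J []) :=
  statement_9_general SE I g s P hI hP hcf hbool hdiam
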